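/- For every n ≥ 2, if G is the star graph K_{1,n} and v is its universal (center) vertex, then γst(G − v) = γst(G) + deg_G(v) − 1; that is, γst(K_{1,n} − v) = n = γst(K_{1,n}) + n − 1. In particular, the upper bound γst(G − v) ≤ γst(G) + deg_G(v) − 1 is tight. -/

import Mathlib

/-- The degree of a vertex `x` in a graph `G`. -/
noncomputable def sdeg {V : Type*} (G : SimpleGraph V) (x : V) : ℕ :=
  (G.neighborSet x).ncard

/-- `D` is a strong dominating set of `G`: every vertex `x ∉ D` has a neighbor
`y ∈ D` with `deg x ≤ deg y`. -/
def IsStrongDominating {V : Type*} (G : SimpleGraph V) (D : Set V) : Prop :=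
  ∀ x ∉ D, ∃ y ∈ D, G.Adj x y ∧ sdeg G x ≤ sdeg G y

/-- The strong domination number of `G`. -/
noncomputable def sdn {V : Type*} (G : SimpleGraph V) : ℕ :=
  sInf {n | ∃ D : Set V, IsStrongDominating G D ∧ D.ncard = n}

/-- Vertex deletion `G - v`: the induced subgraph on the complement of `{v}`. -/
def delVtx {V : Type*} (G : SimpleGraph V) (v : V) : SimpleGraph {x : V // x ≠ v} where
  Adj a b := G.Adj a.1 b.1
  symm := ⟨by intro a b h; exact G.adj_symm h⟩
  loopless := ⟨by intro a h; exact G.irrefl h⟩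

/-- Vertex contraction `G / v`: delete `v` and put a clique on its open neighborhood. -/
def contractVtx {V : Type*} (G : SimpleGraph V) (v : V) : SimpleGraph {x : V // x ≠ v} where
  Adj a b := a ≠ b ∧ (G.Adj a.1 b.1 ∨ (G.Adj v a.1 ∧ G.Adj v b.1))
  symm := ⟨by
    rintro a b ⟨hab, h | ⟨ha, hb⟩⟩
    · exact ⟨hab.symm, Or.inl h.symm⟩
    · exact ⟨hab.symm, Or.inr ⟨hb, ha⟩⟩⟩
  loopless := ⟨by rintro a ⟨h, -⟩; exact h rfl⟩

/-- `G ⊙ v`: remove all edges between any pair of neighbors of `v`. -/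
def odotVtx {V : Type*} (G : SimpleGraph V) (v : V) : SimpleGraph V where
  Adj x y := G.Adj x y ∧ ¬(G.Adj v x ∧ G.Adj v y)
  symm := ⟨by
    rintro x y ⟨h, hn⟩
    exact ⟨h.symm, fun hc => hn ⟨hc.2, hc.1⟩⟩⟩
  loopless := ⟨by rintro x ⟨h, -⟩; exact G.irrefl h⟩

/-- Edge contraction `G / uv`: merge `v` into `u`. -/
def contractEdge {V : Type*} (G : SimpleGraph V) (u v : V) : SimpleGraph {x : V // x ≠ v} where
  Adj a b := a ≠ b ∧ (G.Adj a.1 b.1 ∨ (a.1 = u ∧ G.Adj v b.1) ∨ (b.1 = u ∧ G.Adj v a.1))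
  symm := ⟨by
    rintro a b ⟨hab, h | h | h⟩
    · exact ⟨hab.symm, Or.inl h.symm⟩
    · exact ⟨hab.symm, Or.inr (Or.inr h)⟩
    · exact ⟨hab.symm, Or.inr (Or.inl h)⟩⟩
  loopless := ⟨by rintro a ⟨h, -⟩; exact h rfl⟩

/-- The star `K_{1,n}` with center `none` and leaves `some i`. -/
def starG (n : ℕ) : SimpleGraph (Option (Fin n)) where
  Adj a b := (a = none ∧ b ≠ none) ∨ (a ≠ none ∧ b = none)
  symm := ⟨by
    rintro a b (⟨h1, h2⟩ | ⟨h1, h2⟩)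
    · exact Or.inr ⟨h2, h1⟩
    · exact Or.inl ⟨h2, h1⟩⟩
  loopless := ⟨by
    rintro a (⟨h1, h2⟩ | ⟨h1, h2⟩)
    exacts [h2 h1, h1 h2]⟩

/-- The path graph `P_n` on vertices `0, …, n-1`, consecutive integers adjacent. -/
def pathG (n : ℕ) : SimpleGraph (Fin n) where
  Adj i j := i.1 + 1 = j.1 ∨ j.1 + 1 = i.1
  symm := ⟨by intro i j h; exact h.symm⟩
  loopless := ⟨by rintro i (h | h) <;> omega⟩

section StrongDomination

variable {V : Type*} {G : SimpleGraph V}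

lemma isStrongDominating_univ (G : SimpleGraph V) : IsStrongDominating G Set.univ :=
  fun _ hx => absurd (Set.mem_univ _) hx

lemma sdn_le_ncard {D : Set V} (hD : IsStrongDominating G D) : sdn G ≤ D.ncard :=
  Nat.sInf_le ⟨D, hD, rfl⟩

lemma le_sdn {k : ℕ} (h : ∀ D, IsStrongDominating G D → k ≤ D.ncard) : k ≤ sdn G :=
  le_csInf ⟨_, Set.univ, isStrongDominating_univ G, rfl⟩ (by rintro _ ⟨D, hD, rfl⟩; exact h D hD)

lemma IsStrongDominating.nonempty [Nonempty V] {D : Set V} (hD : IsStrongDominating G D) :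
    D.Nonempty := by
  by_contra hempty
  obtain ⟨x⟩ := ‹Nonempty V›
  obtain ⟨y, hy, -⟩ := hD x fun hx => hempty ⟨x, hx⟩
  exact hempty ⟨y, hy⟩

lemma isStrongDominating_bot_iff {D : Set V} :
    IsStrongDominating (⊥ : SimpleGraph V) D ↔ D = Set.univ := by
  refine ⟨fun hD => Set.eq_univ_of_forall fun x => ?_, fun hD => hD ▸ isStrongDominating_univ ⊥⟩
  by_contra hx
  obtain ⟨y, -, hxy, -⟩ := hD x hx
  exact hxy

lemma sdn_bot : sdn (⊥ : SimpleGraph V) = Nat.card V := by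
  rw [← Set.ncard_univ]
  exact le_antisymm (sdn_le_ncard (isStrongDominating_univ ⊥))
    (le_sdn fun D hD => by rw [isStrongDominating_bot_iff.mp hD])

lemma sdeg_le_card_sub_one [Finite V] (x : V) : sdeg G x ≤ Nat.card V - 1 := by
  calc sdeg G x ≤ ({x}ᶜ : Set V).ncard :=
        Set.ncard_le_ncard fun _ hy => (G.ne_of_adj hy).symm
    _ = Nat.card V - 1 := by rw [Set.ncard_compl, Set.ncard_singleton]

lemma sdeg_of_forall_adj [Finite V] {v : V} (hv : ∀ w, w ≠ v → G.Adj v w) :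
    sdeg G v = Nat.card V - 1 := by
  have hnbr : G.neighborSet v = {v}ᶜ :=
    Set.ext fun w => ⟨fun h => (G.ne_of_adj h).symm, hv w⟩
  rw [sdeg, hnbr, Set.ncard_compl, Set.ncard_singleton]

/-- A vertex adjacent to all others has maximum degree, so it strongly dominates alone. -/
lemma sdn_eq_one_of_forall_adj [Finite V] {v : V} (hv : ∀ w, w ≠ v → G.Adj v w) :
    sdn G = 1 := by
  have : Nonempty V := ⟨v⟩
  have hdom : IsStrongDominating G {v} := fun x hx =>
    ⟨v, rfl, (hv x hx).symm, (sdeg_of_forall_adj hv).symm ▸ sdeg_le_card_sub_one x⟩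
  exact le_antisymm ((sdn_le_ncard hdom).trans_eq (Set.ncard_singleton v))
    (le_sdn fun D hD => (Set.ncard_pos).mpr hD.nonempty)

end StrongDomination

lemma starG_adj_none {n : ℕ} {b : Option (Fin n)} : (starG n).Adj none b ↔ b ≠ none := by
  simp [starG]

lemma delVtx_starG_none (n : ℕ) : delVtx (starG n) none = ⊥ := by
  ext a b
  simp [delVtx, starG, a.2, b.2]

theorem star_delete_center_tight_general (n : ℕ) :
    (sdn (delVtx (starG n) (none : Option (Fin n))) : ℤ)
        = (sdn (starG n) : ℤ) + (sdeg (starG n) (none : Option (Fin n)) : ℤ) - 1 ∧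
    sdn (delVtx (starG n) (none : Option (Fin n))) = n := by
  have hcenter : ∀ w, w ≠ none → (starG n).Adj none w := fun _ => starG_adj_none.mpr
  have hdel : sdn (delVtx (starG n) none) = n := by
    rw [delVtx_starG_none, sdn_bot, Nat.card_eq_fintype_card, Fintype.card_subtype_compl]
    simp
  rw [hdel, sdn_eq_one_of_forall_adj hcenter, sdeg_of_forall_adj hcenter]
  simp

/-- for n ≥ 2 and the center v of the star K_{1,n},
γst(K_{1,n} − v) = γst(K_{1,n}) + deg(v) − 1 and γst(K_{1,n} − v) = n. -/
theorem star_delete_center_tight (n : ℕ) (hn : 2 ≤ n) :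
    (sdn (delVtx (starG n) (none : Option (Fin n))) : ℤ)
        = (sdn (starG n) : ℤ) + (sdeg (starG n) (none : Option (Fin n)) : ℤ) - 1 ∧
    sdn (delVtx (starG n) (none : Option (Fin n))) = n :=
  star_delete_center_tight_general n
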